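/- Let s be a type-full good λ-frame on an AEC K. Then the type-full pre-(≤λ,λ)-frame induced by 1-s-forking reflects down. -/

import Mathlib

/-!
# Abstract elementary classes: basic notions

We axiomatize abstract elementary classes (AECs): a class of models together with
carriers, a strong substructure relation `le` (with its inclusion maps), and a notion of
`K`-embedding, satisfying the usual axioms (coherence, Tarski–Vaught chain axioms and the
Löwenheim–Skolem–Tarski axiom).  On top of this we define Galois types (as equivalence
classes of pointed extensions), categoricity, amalgamation, saturation, tameness, limit
models, good frames, orthogonality, unidimensionality, pre-frames for long types,
domination and uniqueness triples, etc.
-/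

universe u

open Cardinal

/-- An abstract elementary class, presented axiomatically.  `le` is the strong substructure
relation `≤_K` (with associated inclusion maps `incl`), and `Emb M N f` states that `f` is a
`K`-embedding of `M` into `N`, i.e. an isomorphism from `M` onto a strong submodel of `N`. -/
structure AEC : Type (u + 2) where
  /-- the models of the class -/
  Model : Type (u + 1)
  /-- the underlying set (carrier) of a model -/
  Carrier : Model → Type u
  /-- the strong substructure relation `≤_K` -/
  le : Model → Model → Prop
  /-- the inclusion map of a strong substructure -/
  incl : ∀ {M N : Model}, le M N → (Carrier M → Carrier N)
  /-- `Emb M N f` : `f` is a `K`-embedding from `M` into `N` -/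
  Emb : ∀ (M N : Model), (Carrier M → Carrier N) → Prop
  le_refl : ∀ M : Model, le M M
  le_trans : ∀ {M N P : Model}, le M N → le N P → le M P
  incl_refl : ∀ M : Model, incl (le_refl M) = id
  incl_trans : ∀ {M N P : Model} (h₁ : le M N) (h₂ : le N P),
    incl (le_trans h₁ h₂) = incl h₂ ∘ incl h₁
  emb_of_le : ∀ {M N : Model} (h : le M N), Emb M N (incl h)
  emb_injective : ∀ {M N : Model} {f}, Emb M N f → Function.Injective f
  emb_id : ∀ M : Model, Emb M M id
  emb_comp : ∀ {M N P : Model} {f g}, Emb M N f → Emb N P g → Emb M P (g ∘ f)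
  /-- a `K`-embedding is an isomorphism onto a strong submodel -/
  emb_range : ∀ {M N : Model} {f}, Emb M N f →
    ∃ (M' : Model) (h : le M' N) (g : Carrier M → Carrier M'),
      Emb M M' g ∧ Function.Bijective g ∧ incl h ∘ g = f
  /-- the coherence axiom -/
  coherence : ∀ {M₁ M₂ N : Model} (h₁ : le M₁ N) (h₂ : le M₂ N),
    Set.range (incl h₁) ⊆ Set.range (incl h₂) →
      ∃ h : le M₁ M₂, incl h₂ ∘ incl h = incl h₁
  /-- the Löwenheim–Skolem–Tarski number -/
  LS : Cardinal.{u}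
  infinite_LS : ℵ₀ ≤ LS
  /-- the Löwenheim–Skolem–Tarski axiom -/
  ls_axiom : ∀ (M : Model) (A : Set (Carrier M)),
    ∃ (M₀ : Model) (h : le M₀ M),
      A ⊆ Set.range (incl h) ∧ #(Carrier M₀) ≤ #(↥A) + LS
  /-- the Tarski–Vaught chain axioms: a `≤_K`-increasing chain has a union, which is a
  `≤_K`-extension of each member and is `≤_K`-below any common `≤_K`-extension. -/
  chain_union : ∀ {ι : Type u} [inst : LinearOrder ι] [inst2 : Nonempty ι] (M : ι → Model)
    (hle : ∀ i j : ι, i ≤ j → le (M i) (M j)),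
    ∃ (N : Model) (h : ∀ i : ι, le (M i) N),
      (∀ x : Carrier N, ∃ i : ι, x ∈ Set.range (incl (h i))) ∧
      ∀ P : Model, (∀ i : ι, le (M i) P) → le N P

namespace AEC

/-- The cardinality of a model. -/
def card (K : AEC.{u}) (M : K.Model) : Cardinal.{u} := #(K.Carrier M)

/-- Isomorphism of models of `K`. -/
def Iso (K : AEC.{u}) (M N : K.Model) : Prop :=
  ∃ (f : K.Carrier M → K.Carrier N) (g : K.Carrier N → K.Carrier M),
    K.Emb M N f ∧ K.Emb N M g ∧ g ∘ f = id ∧ f ∘ g = id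

/-- `K` is categorical in `μ`: it has exactly one model of cardinality `μ` up to
isomorphism. -/
def Categorical (K : AEC.{u}) (μ : Cardinal.{u}) : Prop :=
  (∃ M : K.Model, K.card M = μ) ∧
  ∀ M N : K.Model, K.card M = μ → K.card N = μ → K.Iso M N

/-- The amalgamation property. -/
def Amalgamation (K : AEC.{u}) : Prop :=
  ∀ ⦃M₀ M₁ M₂ : K.Model⦄ (h₁ : K.le M₀ M₁) (h₂ : K.le M₀ M₂),
    ∃ (N : K.Model) (f₁ : K.Carrier M₁ → K.Carrier N) (f₂ : K.Carrier M₂ → K.Carrier N),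
      K.Emb M₁ N f₁ ∧ K.Emb M₂ N f₂ ∧ f₁ ∘ K.incl h₁ = f₂ ∘ K.incl h₂

/-- No maximal models. -/
def NoMaxModels (K : AEC.{u}) : Prop :=
  ∀ M : K.Model, ∃ (N : K.Model) (h : K.le M N), ¬ Function.Surjective (K.incl h)

/-- Arbitrarily large models. -/
def ArbitrarilyLargeModels (K : AEC.{u}) : Prop :=
  ∀ μ : Cardinal.{u}, ∃ M : K.Model, μ ≤ K.card M

/-- `N` is universal over `M` (witnessed by `h : M ≤ N`): every extension of `M` of the same
cardinality as `M` embeds into `N` over `M`. -/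
def UniversalOver (K : AEC.{u}) {M N : K.Model} (h : K.le M N) : Prop :=
  ∀ (N' : K.Model) (h' : K.le M N'), K.card N' = K.card M →
    ∃ f : K.Carrier N' → K.Carrier N, K.Emb N' N f ∧ f ∘ K.incl h' = K.incl h

/-- An increasing continuous chain of models indexed by the ordinals `< δ`. -/
structure ChainLT (K : AEC.{u}) (δ : Ordinal.{u}) : Type (u + 1) where
  M : ∀ i : Ordinal.{u}, i < δ → K.Model
  mono : ∀ ⦃i j : Ordinal.{u}⦄ (hij : i ≤ j) (hj : j < δ),
    K.le (M i (lt_of_le_of_lt hij hj)) (M j hj)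
  continuous : ∀ ⦃j : Ordinal.{u}⦄ (hj : j < δ), Order.IsSuccLimit j →
    ∀ x : K.Carrier (M j hj), ∃ (i : Ordinal.{u}) (hi : i < j),
      x ∈ Set.range (K.incl (mono hi.le hj))

/-- `M` is limit over `M₀`: there is a limit ordinal `δ` and a strictly increasing continuous
chain `⟨N_i : i ≤ δ⟩` with `N_0 = M₀`, `N_δ = M`, and `N_{i+1}` universal over `N_i`. -/
def LimitOver (K : AEC.{u}) (M₀ M : K.Model) : Prop :=
  ∃ (δ : Ordinal.{u}) (hδ : Order.IsSuccLimit δ) (c : K.ChainLT δ)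
    (htop : ∀ (i : Ordinal.{u}) (hi : i < δ), K.le (c.M i hi) M),
    c.M 0 hδ.pos = M₀ ∧
    (∀ x : K.Carrier M, ∃ (i : Ordinal.{u}) (hi : i < δ),
      x ∈ Set.range (K.incl (htop i hi))) ∧
    (∀ (i : Ordinal.{u}) (hi : i < δ),
      K.UniversalOver (c.mono (Order.le_succ i) (hδ.succ_lt hi))) ∧
    (∀ (i j : Ordinal.{u}) (hij : i < j) (hj : j < δ),
      ¬ Function.Surjective (K.incl (c.mono hij.le hj)))

/-- `M` is a limit model. -/
def IsLimitModel (K : AEC.{u}) (M : K.Model) : Prop :=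
  ∃ M₀ : K.Model, K.LimitOver M₀ M

/-- A pointed extension of `M`: a strong extension `N` of `M` together with an `ι`-indexed
tuple of elements of `N`.  Galois types over `M` are equivalence classes of these. -/
structure PtExt (K : AEC.{u}) (ι : Type u) (M : K.Model) : Type (u + 1) where
  N : K.Model
  le : K.le M N
  pt : ι → K.Carrier N

/-- The atomic relation generating equality of Galois types: two pointed extensions are
related if they can be amalgamated over `M` identifying the distinguished tuples. -/
def gtpAtom (K : AEC.{u}) {ι : Type u} {M : K.Model} (p q : K.PtExt ι M) : Prop :=
  ∃ (P : K.Model) (f : K.Carrier p.N → K.Carrier P) (g : K.Carrier q.N → K.Carrier P),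
    K.Emb p.N P f ∧ K.Emb q.N P g ∧
    f ∘ K.incl p.le = g ∘ K.incl q.le ∧ f ∘ p.pt = g ∘ q.pt

/-- Equality of Galois types is the transitive (equivalence) closure of `gtpAtom`. -/
def gtpSetoid (K : AEC.{u}) (ι : Type u) (M : K.Model) : Setoid (K.PtExt ι M) :=
  Relation.EqvGen.setoid (K.gtpAtom (ι := ι) (M := M))

/-- The set of Galois types of `ι`-tuples over `M`. -/
def gS (K : AEC.{u}) (ι : Type u) (M : K.Model) : Type (u + 1) :=
  Quotient (K.gtpSetoid ι M)

/-- The Galois type of the tuple `a` over `M`, as computed in `N`. -/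
def gtp (K : AEC.{u}) {ι : Type u} {M N : K.Model} (h : K.le M N) (a : ι → K.Carrier N) :
    K.gS ι M :=
  Quotient.mk (K.gtpSetoid ι M) ⟨N, h, a⟩

theorem eqvGen_map {α β : Type (u + 1)} {r : α → α → Prop} {r' : β → β → Prop} (f : α → β)
    (hf : ∀ a b, r a b → r' (f a) (f b)) :
    ∀ {a b : α}, Relation.EqvGen r a b → Relation.EqvGen r' (f a) (f b) := by
  intro a b h
  induction h with
  | rel x y hxy => exact Relation.EqvGen.rel _ _ (hf x y hxy)
  | refl x => exact Relation.EqvGen.refl _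
  | symm x y _ ih => exact Relation.EqvGen.symm _ _ ih
  | trans x y z _ _ ih₁ ih₂ => exact Relation.EqvGen.trans _ _ _ ih₁ ih₂

theorem gtpAtom_mono (K : AEC.{u}) {ι : Type u} {M₀ M : K.Model} (h : K.le M₀ M) :
    ∀ p q : K.PtExt ι M, K.gtpAtom p q →
      K.gtpAtom (⟨p.N, K.le_trans h p.le, p.pt⟩ : K.PtExt ι M₀)
        (⟨q.N, K.le_trans h q.le, q.pt⟩ : K.PtExt ι M₀) := by
  rintro p q ⟨P, f, g, hf, hg, hMcomm, hpt⟩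
  refine ⟨P, f, g, hf, hg, ?_, hpt⟩
  show f ∘ K.incl (K.le_trans h p.le) = g ∘ K.incl (K.le_trans h q.le)
  rw [K.incl_trans h p.le, K.incl_trans h q.le, ← Function.comp_assoc,
    ← Function.comp_assoc, hMcomm]

/-- Restriction of a Galois type over `M` to a strong submodel `M₀ ≤ M`. -/
def restrict (K : AEC.{u}) {ι : Type u} {M₀ M : K.Model} (h : K.le M₀ M) (p : K.gS ι M) :
    K.gS ι M₀ :=
  Quotient.map (sa := K.gtpSetoid ι M) (sb := K.gtpSetoid ι M₀)
    (fun pe => ⟨pe.N, K.le_trans h pe.le, pe.pt⟩)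
    (fun _ _ hab => eqvGen_map _ (K.gtpAtom_mono h) hab) p

theorem gtpAtom_reindex (K : AEC.{u}) {ι ι' : Type u} (σ : ι' → ι) {M : K.Model} :
    ∀ p q : K.PtExt ι M, K.gtpAtom p q →
      K.gtpAtom (⟨p.N, p.le, p.pt ∘ σ⟩ : K.PtExt ι' M) (⟨q.N, q.le, q.pt ∘ σ⟩ : K.PtExt ι' M) := by
  rintro p q ⟨P, f, g, hf, hg, hMcomm, hpt⟩
  refine ⟨P, f, g, hf, hg, hMcomm, ?_⟩
  show f ∘ (p.pt ∘ σ) = g ∘ (q.pt ∘ σ)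
  rw [← Function.comp_assoc, ← Function.comp_assoc, hpt]

/-- Reindexing (taking a subtuple of) a Galois type. -/
def reindex (K : AEC.{u}) {ι ι' : Type u} (σ : ι' → ι) {M : K.Model} (p : K.gS ι M) :
    K.gS ι' M :=
  Quotient.map (sa := K.gtpSetoid ι M) (sb := K.gtpSetoid ι' M)
    (fun pe => ⟨pe.N, pe.le, pe.pt ∘ σ⟩)
    (fun _ _ hab => eqvGen_map _ (K.gtpAtom_reindex σ) hab) p

/-- Galois types of single elements over `M`. -/
abbrev gS₁ (K : AEC.{u}) (M : K.Model) : Type (u + 1) := K.gS PUnit.{u + 1} M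

/-- The Galois type of a single element. -/
def gtp₁ (K : AEC.{u}) {M N : K.Model} (h : K.le M N) (a : K.Carrier N) : K.gS₁ M :=
  K.gtp h (fun _ => a)

/-- A Galois type over `M` is algebraic if it is realized in `M`. -/
def Algebraic (K : AEC.{u}) {M : K.Model} (p : K.gS₁ M) : Prop :=
  ∃ a : K.Carrier M, p = K.gtp₁ (K.le_refl M) a

/-- `p ∈ gS(M₀)` is realized in `N ≥ M₀`. -/
def Realizes (K : AEC.{u}) {M₀ N : K.Model} (h : K.le M₀ N) (p : K.gS₁ M₀) : Prop :=
  ∃ a : K.Carrier N, K.gtp₁ h a = p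

/-- `M` is `μ`-saturated: every Galois type over a strong submodel of `M` of cardinality
`< μ` is realized in `M`. -/
def Saturated (K : AEC.{u}) (μ : Cardinal.{u}) (M : K.Model) : Prop :=
  ∀ (M₀ : K.Model) (h : K.le M₀ M), K.card M₀ < μ → ∀ p : K.gS₁ M₀, K.Realizes h p

/-- `K` is `χ`-tame: distinct Galois types over any model differ over some strong submodel of
cardinality `≤ χ`. -/
def Tame (K : AEC.{u}) (χ : Cardinal.{u}) : Prop :=
  ∀ (M : K.Model) (p q : K.gS₁ M), p ≠ q →
    ∃ (M₀ : K.Model) (h : K.le M₀ M), K.card M₀ ≤ χ ∧ K.restrict h p ≠ K.restrict h q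

/-- `K` is `(χ, μ)`-weakly tame: distinct Galois types over any *saturated* model of
cardinality `μ` differ over some strong submodel of cardinality `≤ χ`. -/
def WeaklyTame (K : AEC.{u}) (χ μ : Cardinal.{u}) : Prop :=
  ∀ M : K.Model, K.card M = μ → K.Saturated μ M → ∀ p q : K.gS₁ M, p ≠ q →
    ∃ (M₀ : K.Model) (h : K.le M₀ M), K.card M₀ ≤ χ ∧ K.restrict h p ≠ K.restrict h q

/-- `K` is `(χ, <μ)`-weakly tame. -/
def WeaklyTameLT (K : AEC.{u}) (χ μ : Cardinal.{u}) : Prop :=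
  ∀ μ₀ : Cardinal.{u}, χ ≤ μ₀ → μ₀ < μ → K.WeaklyTame χ μ₀

/-- The class `K^{χ-sat}` of `χ`-saturated models of `K` is categorical in `μ`. -/
def CategoricalSat (K : AEC.{u}) (χ μ : Cardinal.{u}) : Prop :=
  (∃ M : K.Model, K.Saturated χ M ∧ K.card M = μ) ∧
  ∀ M N : K.Model, K.Saturated χ M → K.Saturated χ N →
    K.card M = μ → K.card N = μ → K.Iso M N

/-- `K` has primes (over sets of the form `M ∪ {a}`). -/
def HasPrimes (K : AEC.{u}) : Prop :=
  ∀ (M : K.Model) (p : K.gS₁ M), ¬ K.Algebraic p →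
    ∃ (N : K.Model) (h : K.le M N) (a : K.Carrier N), K.gtp₁ h a = p ∧
      ∀ (N' : K.Model) (h' : K.le M N') (a' : K.Carrier N'), K.gtp₁ h' a' = p →
        ∃ f : K.Carrier N → K.Carrier N', K.Emb N N' f ∧ f ∘ K.incl h = K.incl h' ∧ f a = a'

/-- `p ∈ gS(M)` is minimal (for models of cardinality `μ`): it has exactly one nonalgebraic
extension to any strong extension of `M` of cardinality `μ`. -/
def Minimal (K : AEC.{u}) {M : K.Model} (p : K.gS₁ M) (μ : Cardinal.{u}) : Prop :=
  ∀ (M' : K.Model) (h : K.le M M'), K.card M' = μ →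
    ∃! q : K.gS₁ M', K.restrict h q = p ∧ ¬ K.Algebraic q

end AEC
namespace AEC

/-- A type-full good frame on the subclass `C` of models of `K` (e.g. `C` = the models of
cardinality in an interval `[λ, θ)`, or the saturated models of a fixed cardinality).
`NF h p` means: the Galois type `p` (of a single element, over `M`) does not fork over the
strong submodel `M₀` (where `h : M₀ ≤ M`).  The axioms are Shelah's axioms for good frames,
with all nonalgebraic types basic (type-fullness). -/
structure GoodFrame (K : AEC.{u}) (C : K.Model → Prop) : Type (u + 1) where
  /-- `p` does not fork over `M₀` -/
  NF : ∀ ⦃M₀ M : K.Model⦄, K.le M₀ M → K.gS₁ M → Prop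
  nf_mem : ∀ ⦃M₀ M : K.Model⦄ (h : K.le M₀ M) (p : K.gS₁ M), NF h p → C M₀ ∧ C M
  cls_nonempty : ∃ M : K.Model, C M
  cls_amalgamation : ∀ ⦃M₀ M₁ M₂ : K.Model⦄ (h₁ : K.le M₀ M₁) (h₂ : K.le M₀ M₂),
    C M₀ → C M₁ → C M₂ →
    ∃ (N : K.Model) (f₁ : K.Carrier M₁ → K.Carrier N) (f₂ : K.Carrier M₂ → K.Carrier N),
      C N ∧ K.Emb M₁ N f₁ ∧ K.Emb M₂ N f₂ ∧ f₁ ∘ K.incl h₁ = f₂ ∘ K.incl h₂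
  cls_jointEmbedding : ∀ ⦃M₁ M₂ : K.Model⦄, C M₁ → C M₂ →
    ∃ (N : K.Model) (f₁ : K.Carrier M₁ → K.Carrier N) (f₂ : K.Carrier M₂ → K.Carrier N),
      C N ∧ K.Emb M₁ N f₁ ∧ K.Emb M₂ N f₂
  cls_noMaxModels : ∀ ⦃M : K.Model⦄, C M →
    ∃ (N : K.Model) (h : K.le M N), C N ∧ ¬ Function.Surjective (K.incl h)
  /-- stability: there are at most `‖M‖` Galois types over any `M` in the class -/
  cls_stability : ∀ ⦃M : K.Model⦄, C M → #(K.gS₁ M) ≤ Cardinal.lift.{u + 1} (K.card M)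
  nf_mono_base : ∀ ⦃M₀ M₀' M : K.Model⦄ (h₀ : K.le M₀ M₀') (h₁ : K.le M₀' M)
    (p : K.gS₁ M), C M₀' → NF (K.le_trans h₀ h₁) p → NF h₁ p
  nf_mono_restrict : ∀ ⦃M₀ M' M : K.Model⦄ (h₀ : K.le M₀ M') (h₁ : K.le M' M)
    (p : K.gS₁ M), C M' → NF (K.le_trans h₀ h₁) p → NF h₀ (K.restrict h₁ p)
  nf_extension : ∀ ⦃M N : K.Model⦄ (h : K.le M N), C M → C N →
    ∀ p : K.gS₁ M, ¬ K.Algebraic p → ∃ q : K.gS₁ N, K.restrict h q = p ∧ NF h q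
  nf_uniqueness : ∀ ⦃M N : K.Model⦄ (h : K.le M N) (q q' : K.gS₁ N),
    NF h q → NF h q' → K.restrict h q = K.restrict h q' → q = q'
  nf_transitivity : ∀ ⦃M₀ M₁ M₂ : K.Model⦄ (h₀ : K.le M₀ M₁) (h₁ : K.le M₁ M₂)
    (p : K.gS₁ M₂), NF h₁ p → NF h₀ (K.restrict h₁ p) → NF (K.le_trans h₀ h₁) p
  nf_local_character : ∀ (δ : Ordinal.{u}), Order.IsSuccLimit δ →
    ∀ (c : K.ChainLT δ) (Mt : K.Model)
      (ht : ∀ (i : Ordinal.{u}) (hi : i < δ), K.le (c.M i hi) Mt),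
    (∀ (i : Ordinal.{u}) (hi : i < δ), C (c.M i hi)) → C Mt →
    (∀ x : K.Carrier Mt, ∃ (i : Ordinal.{u}) (hi : i < δ),
      x ∈ Set.range (K.incl (ht i hi))) →
    ∀ p : K.gS₁ Mt, ¬ K.Algebraic p → ∃ (i : Ordinal.{u}) (hi : i < δ), NF (ht i hi) p
  nf_continuity : ∀ (δ : Ordinal.{u}) (hδ : Order.IsSuccLimit δ) (c : K.ChainLT δ) (Mt : K.Model)
    (ht : ∀ (i : Ordinal.{u}) (hi : i < δ), K.le (c.M i hi) Mt),
    (∀ (i : Ordinal.{u}) (hi : i < δ), C (c.M i hi)) → C Mt →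
    (∀ x : K.Carrier Mt, ∃ (i : Ordinal.{u}) (hi : i < δ),
      x ∈ Set.range (K.incl (ht i hi))) →
    ∀ p : K.gS₁ Mt, ¬ K.Algebraic p →
    (∀ (i : Ordinal.{u}) (hi : i < δ),
      NF (c.mono (zero_le : (0 : Ordinal.{u}) ≤ i) hi) (K.restrict (ht i hi) p)) →
    NF (ht 0 hδ.pos) p
  nf_symmetry : ∀ ⦃M₀ M₁ M₃ : K.Model⦄ (h₀₁ : K.le M₀ M₁) (h₁₃ : K.le M₁ M₃),
    C M₀ → C M₁ → C M₃ → ∀ (a₁ : K.Carrier M₁) (a₂ : K.Carrier M₃),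
    ¬ K.Algebraic (K.gtp₁ h₁₃ a₂) → NF h₀₁ (K.gtp₁ h₁₃ a₂) →
    ¬ K.Algebraic (K.gtp₁ h₀₁ a₁) →
    ∃ (M₃' : K.Model) (h₃₃' : K.le M₃ M₃') (M₂ : K.Model)
      (h₀₂ : K.le M₀ M₂) (h₂₃' : K.le M₂ M₃'), C M₂ ∧ C M₃' ∧
      K.incl h₃₃' a₂ ∈ Set.range (K.incl h₂₃') ∧
      NF h₀₂ (K.gtp₁ h₂₃' (K.incl h₃₃' (K.incl h₁₃ a₁)))

namespace GoodFrame

variable {K : AEC.{u}} {C : K.Model → Prop}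

/-- The pair `⟨a b⟩` is independent in `(M, N)`, computed with models in the subclass `G`:
there are `N' ≥ N` and `M ≤ M' ≤ N'` (in `G`) with `b ∈ M'` such that `gtp(a / M'; N')`
does not fork over `M`. -/
def IndepPairIn (s : GoodFrame K C) (G : K.Model → Prop)
    {M N : K.Model} (h : K.le M N) (a b : K.Carrier N) : Prop :=
  ∃ (N' : K.Model) (hNN' : K.le N N') (M' : K.Model) (hMM' : K.le M M')
    (hM'N' : K.le M' N'), G N' ∧ G M' ∧
    K.incl hNN' b ∈ Set.range (K.incl hM'N') ∧
    s.NF hMM' (K.gtp₁ hM'N' (K.incl hNN' a))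

/-- `p` and `q` are weakly orthogonal (computed with models in the subclass `G`). -/
def WkPerpIn (s : GoodFrame K C) (G : K.Model → Prop)
    {M : K.Model} (p q : K.gS₁ M) : Prop :=
  ∀ (N : K.Model) (h : K.le M N), G N → ∀ a b : K.Carrier N,
    K.gtp₁ h a = p → K.gtp₁ h b = q → s.IndepPairIn G h a b

/-- `p` and `q` are orthogonal (computed with models in the subclass `G`): all their
nonforking extensions are weakly orthogonal. -/
def PerpIn (s : GoodFrame K C) (G : K.Model → Prop)
    {M : K.Model} (p q : K.gS₁ M) : Prop :=
  ∀ (N : K.Model) (h : K.le M N), G N →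
    ∀ p' q' : K.gS₁ N, K.restrict h p' = p → s.NF h p' →
      K.restrict h q' = q → s.NF h q' → s.WkPerpIn G p' q'

/-- `s` is unidimensional. -/
def Unidimensional (s : GoodFrame K C) : Prop :=
  ¬ ∀ (M : K.Model), C M → ∀ p : K.gS₁ M, ¬ K.Algebraic p →
    ∃ (M' : K.Model) (h : K.le M M'), C M' ∧
      ∃ p' q : K.gS₁ M', ¬ K.Algebraic p' ∧ ¬ K.Algebraic q ∧
        K.restrict h p' = p ∧ s.PerpIn C p' q

/-- `s` is `μ`-unidimensional (orthogonality computed in the restriction of `s` to `K_μ`). -/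
def UnidimensionalAt (s : GoodFrame K C) (μ : Cardinal.{u}) : Prop :=
  ¬ ∀ (M : K.Model), K.card M = μ → K.IsLimitModel M →
    ∀ p : K.gS₁ M, ¬ K.Algebraic p →
    ∃ (M' : K.Model) (h : K.le M M'), K.card M' = μ ∧ K.IsLimitModel M' ∧
      ∃ p' q : K.gS₁ M', ¬ K.Algebraic p' ∧ ¬ K.Algebraic q ∧
        K.restrict h p' = p ∧ s.PerpIn (fun N => K.card N = μ) p' q

/-- `1-s`-forking for Galois types of arbitrary length: every length-one restriction is
either algebraic or does not `s`-fork over the base. -/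
def NF1 (s : GoodFrame K C) {ι : Type u} ⦃M₀ M : K.Model⦄ (h : K.le M₀ M)
    (p : K.gS ι M) : Prop :=
  ∀ i : ι, K.Algebraic (K.reindex (fun _ : PUnit.{u + 1} => i) p) ∨
    s.NF h (K.reindex (fun _ : PUnit.{u + 1} => i) p)

end GoodFrame

/-- A type-full pre-`(≤ λ, λ)`-frame on `K`: a nonforking relation on Galois types of length
`≤ λ` over models of cardinality `λ`, satisfying invariance and monotonicity (including base
monotonicity). -/
structure PreFrame (K : AEC.{u}) (lam : Cardinal.{u}) : Type (u + 1) where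
  NF : ∀ {ι : Type u} ⦃M₀ M : K.Model⦄, K.le M₀ M → K.gS ι M → Prop
  nf_card : ∀ {ι : Type u} ⦃M₀ M : K.Model⦄ (h : K.le M₀ M) (p : K.gS ι M),
    NF h p → #ι ≤ lam ∧ K.card M₀ = lam ∧ K.card M = lam
  nf_mono_base : ∀ {ι : Type u} ⦃M₀ M₀' M : K.Model⦄ (h₀ : K.le M₀ M₀') (h₁ : K.le M₀' M)
    (p : K.gS ι M), K.card M₀' = lam → NF (K.le_trans h₀ h₁) p → NF h₁ p
  nf_mono_restrict : ∀ {ι : Type u} ⦃M₀ M' M : K.Model⦄ (h₀ : K.le M₀ M') (h₁ : K.le M' M)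
    (p : K.gS ι M), K.card M' = lam → NF (K.le_trans h₀ h₁) p → NF h₀ (K.restrict h₁ p)
  nf_mono_reindex : ∀ {ι ι' : Type u} (σ : ι' → ι) ⦃M₀ M : K.Model⦄ (h : K.le M₀ M)
    (p : K.gS ι M), #ι' ≤ lam → NF h p → NF h (K.reindex σ p)

/-- The pre-frame `t` extends the good frame `s`: they have the same underlying class and
`t`-forking and `s`-forking agree on types of length one. -/
def PreFrame.Extends {K : AEC.{u}} {lam : Cardinal.{u}} {C : K.Model → Prop}
    (t : PreFrame K lam) (s : GoodFrame K C) : Prop :=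
  (∀ M : K.Model, C M ↔ K.card M = lam) ∧
  ∀ ⦃M₀ M : K.Model⦄ (h : K.le M₀ M) (p : K.gS₁ M), t.NF h p ↔ s.NF h p

/-- A nonforking relation `NF` (for types of arbitrary length) *reflects down*: for any
increasing continuous chains `⟨M_i : i < λ⁺⟩`, `⟨N_i : i < λ⁺⟩` in `K_λ` with `M_i ≤ N_i`,
`M_{i+1}` universal over `M_i` and `N_{i+1}` universal over `N_i`, there is `i` such that the
Galois type of (an enumeration of) `N_i` over `M_{i+1}`, computed in `N_{i+1}`, does not
`NF`-fork over `M_i`. -/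
def ReflectsDownRel (K : AEC.{u}) (lam : Cardinal.{u})
    (NF : ∀ (ι : Type u) (M₀ M : K.Model), K.le M₀ M → K.gS ι M → Prop) : Prop :=
  ∀ (c d : K.ChainLT (Order.succ lam).ord)
    (hcd : ∀ (i : Ordinal.{u}) (hi : i < (Order.succ lam).ord), K.le (c.M i hi) (d.M i hi)),
    (∀ (i : Ordinal.{u}) (hi : i < (Order.succ lam).ord), K.card (c.M i hi) = lam) →
    (∀ (i : Ordinal.{u}) (hi : i < (Order.succ lam).ord), K.card (d.M i hi) = lam) →
    (∀ (i : Ordinal.{u}) (hsi : Order.succ i < (Order.succ lam).ord),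
      K.UniversalOver (c.mono (Order.le_succ i) hsi) ∧
      K.UniversalOver (d.mono (Order.le_succ i) hsi)) →
    ∃ (i : Ordinal.{u}) (hsi : Order.succ i < (Order.succ lam).ord),
      NF _ _ _ (c.mono (Order.le_succ i) hsi)
        (K.gtp (hcd (Order.succ i) hsi) (K.incl (d.mono (Order.le_succ i) hsi)))

/-- `(a, M, N)` (with `h : M ≤ N`, `a ∈ N \ M`) is a domination triple for the nonforking
relation `NF`: whenever `N ≤ N'`, `M ≤ M' ≤ N'` (all of cardinality `λ`) and the type of `a`
over `M'` does not `NF`-fork over `M`, the type of (an enumeration of) `N` over `M'` does not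
`NF`-fork over `M`. -/
def DominationTripleRel (K : AEC.{u}) (lam : Cardinal.{u})
    (NF : ∀ (ι : Type u) (M₀ M : K.Model), K.le M₀ M → K.gS ι M → Prop)
    {M N : K.Model} (h : K.le M N) (a : K.Carrier N) : Prop :=
  K.card M = lam ∧ K.card N = lam ∧ a ∉ Set.range (K.incl h) ∧
  ∀ (M' N' : K.Model) (hMM' : K.le M M') (hM'N' : K.le M' N') (hNN' : K.le N N'),
    K.card M' = lam → K.card N' = lam →
    NF PUnit.{u + 1} _ _ hMM' (K.gtp₁ hM'N' (K.incl hNN' a)) →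
    NF (K.Carrier N) _ _ hMM' (K.gtp hM'N' (K.incl hNN'))

/-- An amalgam of `M₁` and `M₂` over `M₀` (inside `K_λ`). -/
structure Amalgam (K : AEC.{u}) (lam : Cardinal.{u}) {M₀ M₁ M₂ : K.Model}
    (h₁ : K.le M₀ M₁) (h₂ : K.le M₀ M₂) : Type (u + 1) where
  N : K.Model
  card_N : K.card N = lam
  f₁ : K.Carrier M₁ → K.Carrier N
  f₂ : K.Carrier M₂ → K.Carrier N
  emb₁ : K.Emb M₁ N f₁
  emb₂ : K.Emb M₂ N f₂
  comm : f₁ ∘ K.incl h₁ = f₂ ∘ K.incl h₂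

/-- Equivalence of amalgams over `M₀`. -/
def Amalgam.Equiv {K : AEC.{u}} {lam : Cardinal.{u}} {M₀ M₁ M₂ : K.Model}
    {h₁ : K.le M₀ M₁} {h₂ : K.le M₀ M₂} (A B : K.Amalgam lam h₁ h₂) : Prop :=
  ∃ (P : K.Model) (gA : K.Carrier A.N → K.Carrier P) (gB : K.Carrier B.N → K.Carrier P),
    K.card P = lam ∧ K.Emb A.N P gA ∧ K.Emb B.N P gB ∧
    gA ∘ A.f₁ = gB ∘ B.f₁ ∧ gA ∘ A.f₂ = gB ∘ B.f₂

/-- The amalgam `A` of `N` and `M₁` over `M` is such that `gtp(f₁(a) / f₂[M₁]; A.N)` does not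
fork over `M` (where `f₂[M₁]` is realized as a strong submodel `M₂ ≤ A.N` isomorphic to `M₁`
via `f₂`). -/
def Amalgam.NFCond {K : AEC.{u}} {C : K.Model → Prop} (s : GoodFrame K C)
    {lam : Cardinal.{u}} {M N M₁ : K.Model} {h : K.le M N} {h₁ : K.le M M₁}
    (A : K.Amalgam lam h h₁) (a : K.Carrier N) : Prop :=
  ∃ (M₂ : K.Model) (hM₂ : K.le M₂ A.N) (e : K.Carrier M₁ → K.Carrier M₂)
    (hMM₂ : K.le M M₂), K.Emb M₁ M₂ e ∧ Function.Bijective e ∧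
      K.incl hM₂ ∘ e = A.f₂ ∧ K.incl hMM₂ = e ∘ K.incl h₁ ∧
      s.NF hMM₂ (K.gtp₁ hM₂ (A.f₁ a))

/-- `(a, M, N)` is a uniqueness triple for the good `λ`-frame `s`:  for every `M₁ ∈ K_λ` with
`M ≤ M₁` there is, *up to equivalence over `M`*, a *unique* amalgam of `N` and `M₁` over `M`
in which the type of (the image of) `a` over (the image of) `M₁` does not fork over `M`. -/
def UniquenessTriple {K : AEC.{u}} {C : K.Model → Prop} (s : GoodFrame K C)
    (lam : Cardinal.{u}) {M N : K.Model} (h : K.le M N) (a : K.Carrier N) : Prop :=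
  K.card M = lam ∧ K.card N = lam ∧ a ∉ Set.range (K.incl h) ∧
  ∀ (M₁ : K.Model) (h₁ : K.le M M₁), K.card M₁ = lam →
    (∃ A : K.Amalgam lam h h₁, A.NFCond s a) ∧
    ∀ A B : K.Amalgam lam h h₁, A.NFCond s a → B.NFCond s a → A.Equiv B

/-- `s` is weakly successful: it has the existence property for uniqueness triples. -/
def GoodFrame.WeaklySuccessful {K : AEC.{u}} {C : K.Model → Prop} (s : GoodFrame K C)
    (lam : Cardinal.{u}) : Prop :=
  ∀ (M : K.Model), K.card M = lam → ∀ p : K.gS₁ M, ¬ K.Algebraic p →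
    ∃ (N : K.Model) (h : K.le M N) (a : K.Carrier N),
      K.gtp₁ h a = p ∧ UniquenessTriple s lam h a

end AEC
namespace AEC
variable {K : AEC.{u}}

theorem incl_incl {M N P : K.Model} (h₁ : K.le M N) (h₂ : K.le N P) (h₃ : K.le M P)
    (x : K.Carrier M) : K.incl h₂ (K.incl h₁ x) = K.incl h₃ x :=
  (congrFun (K.incl_trans h₁ h₂) x).symm

theorem gtp_eq_of_incl {ι : Type u} {M N N' : K.Model} (hMN : K.le M N) (hNN' : K.le N N')
    (hMN' : K.le M N') (a : ι → K.Carrier N) :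
    K.gtp hMN' (K.incl hNN' ∘ a) = K.gtp hMN a := by
  refine Quot.sound (Relation.EqvGen.rel _ _ ?_)
  refine ⟨N', id, K.incl hNN', K.emb_id N', K.emb_of_le hNN', ?_, rfl⟩
  exact K.incl_trans hMN hNN'

theorem restrict_gtp {ι : Type u} {M₀ M N : K.Model} (h : K.le M₀ M) (h' : K.le M N)
    (a : ι → K.Carrier N) :
    K.restrict h (K.gtp h' a) = K.gtp (K.le_trans h h') a := rfl

theorem reindex_gtp {ι ι' : Type u} (σ : ι' → ι) {M N : K.Model} (h : K.le M N)
    (a : ι → K.Carrier N) :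
    K.reindex σ (K.gtp h a) = K.gtp h (a ∘ σ) := rfl

end AEC
namespace AEC
variable {K : AEC.{u}}

theorem restrict_gtp₁ {M₀ M N : K.Model} (h : K.le M₀ M) (h' : K.le M N)
    (a : K.Carrier N) :
    K.restrict h (K.gtp₁ h' a) = K.gtp₁ (K.le_trans h h') a := rfl

theorem gtp₁_eq_of_incl {M N N' : K.Model} (hMN : K.le M N) (hNN' : K.le N N')
    (hMN' : K.le M N') (a : K.Carrier N) :
    K.gtp₁ hMN' (K.incl hNN' a) = K.gtp₁ hMN a :=
  gtp_eq_of_incl hMN hNN' hMN' (fun _ => a)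

end AEC
section OrdHelp
open Ordinal

theorem natSup_lt {Λ : Ordinal.{u}} (hcof : ℵ₀ < Λ.cof) (g : ℕ → Ordinal.{u})
    (hg : ∀ n, g n < Λ) : (⨆ n, g n) < Λ :=
  Ordinal.iSup_lt_ord_lift (by simpa using hcof) hg

theorem natSup_isLimit {g : ℕ → Ordinal.{u}} (hg : ∀ n, g n < g (n + 1)) :
    Order.IsSuccLimit (⨆ n, g n) ∧ ∀ n, g n < ⨆ n, g n := by
  have hlt : ∀ n, g n < ⨆ n, g n := fun n => (hg n).trans_le (Ordinal.le_iSup g (n + 1))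
  refine ⟨Ordinal.isSuccLimit_iff.mpr ⟨((zero_le (a := g 0)).trans_lt (hlt 0)).ne',
    Order.isSuccPrelimit_of_succ_lt fun a ha => ?_⟩, hlt⟩
  obtain ⟨n, hn⟩ : ∃ n, a < g n := by
    by_contra hcon
    push_neg at hcon
    exact ha.not_ge (Ordinal.iSup_le hcon)
  exact (Order.succ_le_of_lt hn).trans_lt (hlt n)

theorem isSuccLimit_of_isLimit {o : Ordinal.{u}} (h : Order.IsSuccLimit o) : Order.IsSuccLimit o :=
  h

theorem press_down {Λ : Ordinal.{u}} (hΛ : Order.IsSuccLimit Λ) (hcof : ℵ₀ < Λ.cof)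
    (f : Ordinal.{u} → Ordinal.{u}) (hf : ∀ i, i < Λ → Order.IsSuccLimit i → f i < i) :
    ∃ j₀, j₀ < Λ ∧ ∀ α, α < Λ →
      ∃ i, i < Λ ∧ α ≤ i ∧ Order.IsSuccLimit i ∧ f i ≤ j₀ := by
  by_contra hcon
  push_neg at hcon
  choose α hαΛ hb using hcon
  let g : ℕ → {o : Ordinal.{u} // o < Λ} := fun n => Nat.rec ⟨0, hΛ.pos⟩
    (fun _ p => ⟨Order.succ (max (α p.1 p.2) p.1),
      hΛ.succ_lt (max_lt (hαΛ p.1 p.2) p.2)⟩) n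
  have hmono : ∀ n, (g n).1 < (g (n + 1)).1 := fun n =>
    (le_max_right _ _).trans_lt (Order.lt_succ _)
  obtain ⟨hδlim, hlt⟩ := natSup_isLimit hmono
  set δ := ⨆ n, (g n).1 with hδdef
  have hδΛ : δ < Λ := natSup_lt hcof _ (fun n => (g n).2)
  have hfδ : f δ < δ := hf δ hδΛ (isSuccLimit_of_isLimit hδlim)
  obtain ⟨n, hn⟩ : ∃ n, f δ < (g n).1 := by
    by_contra hcon2
    push_neg at hcon2
    exact hfδ.not_ge (Ordinal.iSup_le hcon2)
  have hge : α (g n).1 (g n).2 ≤ δ :=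
    ((le_max_left _ _).trans (Order.le_succ _)).trans (hlt (n + 1)).le
  exact absurd (hb (g n).1 (g n).2 δ hδΛ hge (isSuccLimit_of_isLimit hδlim)) hn.le.not_gt

end OrdHelp
namespace AEC

theorem aleph0_le_of_goodFrame {K : AEC.{u}} {lam : Cardinal.{u}}
    (s : GoodFrame K (fun M => K.card M = lam)) : ℵ₀ ≤ lam := by
  by_contra hlt
  push_neg at hlt
  obtain ⟨M, hM⟩ := s.cls_nonempty
  obtain ⟨N, h, hN, hns⟩ := s.cls_noMaxModels hM
  have hM' : #(K.Carrier M) = lam := hM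
  have hN' : #(K.Carrier N) = lam := hN
  have hfin : Finite (K.Carrier M) := by
    rw [← Cardinal.mk_lt_aleph0_iff, hM']; exact hlt
  obtain ⟨e⟩ : Nonempty (K.Carrier N ≃ K.Carrier M) := by
    rw [← Cardinal.eq, hN', hM']
  have hinj : Function.Injective (K.incl h) := K.emb_injective (K.emb_of_le h)
  have hsurj : Function.Surjective (⇑e ∘ K.incl h) :=
    (Finite.injective_iff_surjective).mp (e.injective.comp hinj)
  apply hns
  intro y
  obtain ⟨x, hx⟩ := hsurj (e y)
  exact ⟨x, e.injective hx⟩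

end AEC
set_option maxHeartbeats 1000000 in
/-- Let `s` be a type-full good `λ`-frame on an AEC `K`.  Then the
type-full pre-`(≤ λ, λ)`-frame induced by `1-s`-forking reflects down. -/
theorem one_forking_reflects_down (K : AEC.{u}) (lam : Cardinal.{u})
    (s : AEC.GoodFrame K (fun M => K.card M = lam)) :
    AEC.ReflectsDownRel K lam (fun ι M₀ M h p => s.NF1 h p) := by
  intro c d hcd hcC hdC _huniv
  classical
  by_contra hcon
  push_neg at hcon
  let Λ : Ordinal.{u} := (Order.succ lam).ord
  have hlam : ℵ₀ ≤ lam := AEC.aleph0_le_of_goodFrame s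
  have hΛlim : Order.IsSuccLimit Λ := Cardinal.isSuccLimit_ord (hlam.trans (Order.le_succ lam))
  have hcofeq : Λ.cof = Order.succ lam := (Cardinal.isRegular_succ hlam).cof_eq
  have hcof : ℵ₀ < Λ.cof := by rw [hcofeq]; exact hlam.trans_lt (Order.lt_succ lam)
  -- extract bad witnesses
  have hcon' : ∀ (i : Ordinal.{u}) (hsi : Order.succ i < Λ),
      ∃ x : K.Carrier (d.M i (lt_of_le_of_lt (Order.le_succ i) hsi)),
        ¬ K.Algebraic (K.gtp₁ (hcd (Order.succ i) hsi)
            (K.incl (d.mono (Order.le_succ i) hsi) x)) ∧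
        ¬ s.NF (c.mono (Order.le_succ i) hsi) (K.gtp₁ (hcd (Order.succ i) hsi)
            (K.incl (d.mono (Order.le_succ i) hsi) x)) := by
    intro i hsi
    have h1 := hcon i hsi
    unfold AEC.GoodFrame.NF1 at h1
    push_neg at h1
    exact h1
  choose X hXna hXnf using hcon'
  -- pull back witnesses at limit stages
  have hpull : ∀ (i : Ordinal.{u}) (hi : i < Λ), Order.IsSuccLimit i →
      ∃ j, ∃ hj : j < i, X i (hΛlim.succ_lt hi) ∈
        Set.range (K.incl (d.mono hj.le hi)) := by
    intro i hi hlim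
    exact d.continuous hi hlim (X i (hΛlim.succ_lt hi))
  choose F hFlt hFmem using hpull
  -- pressing down
  obtain ⟨j₀, hj₀Λ, hE⟩ := press_down hΛlim hcof
    (fun i => if h : i < Λ then if h2 : Order.IsSuccLimit i then F i h h2 else 0 else 0)
    (fun i hi hlim => by simp only [dif_pos hi, dif_pos hlim]; exact hFlt i hi hlim)
  have hE' : ∀ α, α < Λ → ∃ i, ∃ hi : i < Λ, ∃ hlim : Order.IsSuccLimit i,
      Order.succ j₀ ≤ i ∧ α ≤ i ∧ F i hi hlim ≤ j₀ := by
    intro α hα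
    obtain ⟨i, h1, h2, h3, h4⟩ := hE (max α (Order.succ j₀))
      (max_lt hα (hΛlim.succ_lt hj₀Λ))
    simp only [dif_pos h1, dif_pos h3] at h4
    exact ⟨i, h1, h3, (le_max_right _ _).trans h2, (le_max_left _ _).trans h2, h4⟩
  choose I hIΛ hIlim hIj hIge hIF using hE'
  -- transport the witnesses down to `d.M j₀`
  have hzd : ∀ α (hα : α < Λ), ∃ t : K.Carrier (d.M j₀ hj₀Λ),
      K.incl (d.mono ((Order.le_succ j₀).trans (hIj α hα)) (hIΛ α hα)) t
        = X (I α hα) (hΛlim.succ_lt (hIΛ α hα)) := by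
    intro α hα
    obtain ⟨y, hy⟩ := hFmem (I α hα) (hIΛ α hα) (hIlim α hα)
    refine ⟨K.incl (d.mono (hIF α hα) hj₀Λ) y, ?_⟩
    exact (AEC.incl_incl (d.mono (hIF α hα) hj₀Λ)
      (d.mono ((Order.le_succ j₀).trans (hIj α hα)) (hIΛ α hα))
      (d.mono (hFlt _ _ _).le (hIΛ α hα)) y).trans hy
  choose z hz using hzd
  -- pigeonhole: some element of `d.M j₀` works unboundedly often
  have hfib : ∃ t : K.Carrier (d.M j₀ hj₀Λ), ∀ β, β < Λ →
      ∃ α, ∃ hα : α < Λ, β ≤ I α hα ∧ z α hα = t := by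
    by_contra hc
    push_neg at hc
    choose β hβΛ hβ using hc
    have hsup : (⨆ t, β t) < Λ := by
      refine Ordinal.iSup_lt_ord ?_ hβΛ
      have hTcard : #(K.Carrier (d.M j₀ hj₀Λ)) = lam := hdC j₀ hj₀Λ
      rw [hTcard, hcofeq]
      exact Order.lt_succ lam
    exact hβ (z (⨆ t, β t) hsup) (⨆ t, β t) hsup
      ((Ordinal.le_iSup β _).trans (hIge _ hsup)) rfl
  obtain ⟨t, ht⟩ := hfib
  choose A hAΛ hAge hAz using ht
  -- an increasing ω-sequence on whose members the same witness appears
  let w : ℕ → {o : Ordinal.{u} // o < Λ} := fun n => Nat.rec ⟨0, hΛlim.pos⟩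
    (fun _ q => ⟨Order.succ (I (A q.1 q.2) (hAΛ q.1 q.2)),
      hΛlim.succ_lt (hIΛ _ _)⟩) n
  let eseq : ℕ → Ordinal.{u} := fun n => I (A (w n).1 (w n).2) (hAΛ (w n).1 (w n).2)
  have heΛ : ∀ n, eseq n < Λ := fun n => hIΛ _ _
  have hemono : ∀ n, eseq n < eseq (n + 1) := fun n =>
    (Order.lt_succ (eseq n)).trans_le (hAge (w (n + 1)).1 (w (n + 1)).2)
  obtain ⟨hδlim, helt⟩ := natSup_isLimit hemono
  have hδΛ : (⨆ n, eseq n) < Λ := natSup_lt hcof eseq heΛ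
  have hδsl : Order.IsSuccLimit (⨆ n, eseq n) := isSuccLimit_of_isLimit hδlim
  have hcofδ : ∀ a, a < (⨆ n, eseq n) → ∃ n, a < eseq n := by
    intro a ha
    by_contra hc
    push_neg at hc
    exact ha.not_ge (Ordinal.iSup_le hc)
  have hj₀δ : j₀ < (⨆ n, eseq n) := ((Order.lt_succ j₀).trans_le (hIj _ _)).trans (helt 0)
  have het : ∀ n, K.incl (d.mono ((Order.le_succ j₀).trans (hIj _ _)) (heΛ n)) t
      = X (eseq n) (hΛlim.succ_lt (heΛ n)) := by
    intro n
    rw [← hAz (w n).1 (w n).2]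
    exact hz (A (w n).1 (w n).2) (hAΛ (w n).1 (w n).2)
  -- the common element of `d.M δ` and its type over `c.M δ`
  let xA : K.Carrier (d.M (⨆ n, eseq n) hδΛ) :=
    K.incl (d.mono hj₀δ.le hδΛ) t
  let p : K.gS₁ (c.M (⨆ n, eseq n) hδΛ) := K.gtp₁ (hcd (⨆ n, eseq n) hδΛ) xA
  -- restricting `p` to `c.M (succ (eseq n))` gives exactly the bad type at stage `eseq n`
  have hkey : ∀ n, K.restrict (c.mono (hδlim.succ_lt (helt n)).le hδΛ) p
      = K.gtp₁ (hcd (Order.succ (eseq n)) (hΛlim.succ_lt (heΛ n)))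
          (K.incl (d.mono (Order.le_succ (eseq n)) (hΛlim.succ_lt (heΛ n)))
            (X (eseq n) (hΛlim.succ_lt (heΛ n)))) := by
    intro n
    have hx : xA = K.incl (d.mono (hδlim.succ_lt (helt n)).le hδΛ)
        (K.incl (d.mono (Order.le_succ (eseq n)) (hΛlim.succ_lt (heΛ n)))
          (X (eseq n) (hΛlim.succ_lt (heΛ n)))) := by
      rw [AEC.incl_incl _ _ (d.mono (helt n).le hδΛ), ← het n,
        AEC.incl_incl _ _ (d.mono hj₀δ.le hδΛ)]
    show K.restrict _ (K.gtp₁ (hcd (⨆ n, eseq n) hδΛ) xA) = _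
    rw [AEC.restrict_gtp₁, hx,
      AEC.gtp₁_eq_of_incl (hcd (Order.succ (eseq n)) (hΛlim.succ_lt (heΛ n)))
        (d.mono (hδlim.succ_lt (helt n)).le hδΛ)]
  by_cases halg : K.Algebraic p
  · -- the type over the top is algebraic: eventually the bad types are algebraic too
    obtain ⟨b, hb⟩ := halg
    obtain ⟨jb, hjbδ, hbmem⟩ := c.continuous hδΛ hδsl b
    obtain ⟨b', hb'⟩ := hbmem
    obtain ⟨n, hn⟩ := hcofδ jb hjbδ
    have hbeq : b = K.incl (c.mono (hδlim.succ_lt (helt n)).le hδΛ)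
        (K.incl (c.mono (hn.le.trans (Order.le_succ _)) (hΛlim.succ_lt (heΛ n))) b') := by
      rw [AEC.incl_incl _ _ (c.mono hjbδ.le hδΛ), hb']
    have hres := hkey n
    rw [hb, AEC.restrict_gtp₁, hbeq,
      AEC.gtp₁_eq_of_incl (K.le_refl (c.M (Order.succ (eseq n)) (hΛlim.succ_lt (heΛ n))))
        (c.mono (hδlim.succ_lt (helt n)).le hδΛ)] at hres
    exact hXna (eseq n) (hΛlim.succ_lt (heΛ n)) ⟨_, hres.symm⟩
  · -- the type over the top is not algebraic: use local character
    let c' : K.ChainLT (⨆ n, eseq n) :=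
      { M := fun i hi => c.M i (hi.trans hδΛ)
        mono := fun {i j} hij hj => c.mono hij (hj.trans hδΛ)
        continuous := fun {j} hj hlim x => c.continuous (hj.trans hδΛ) hlim x }
    obtain ⟨j, hjδ, hNFj⟩ := s.nf_local_character (⨆ n, eseq n) hδlim c'
      (c.M (⨆ n, eseq n) hδΛ) (fun i hi => c.mono hi.le hδΛ)
      (fun i hi => hcC i (hi.trans hδΛ)) (hcC (⨆ n, eseq n) hδΛ)
      (fun x => c.continuous hδΛ hδsl x) p halg
    obtain ⟨n, hn⟩ := hcofδ j hjδ
    have h1 : s.NF (c.mono (helt n).le hδΛ) p :=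
      s.nf_mono_base (c.mono hn.le (heΛ n)) (c.mono (helt n).le hδΛ) p
        (hcC (eseq n) (heΛ n)) hNFj
    have h2 := s.nf_mono_restrict
      (c.mono (Order.le_succ (eseq n)) (hΛlim.succ_lt (heΛ n)))
      (c.mono (hδlim.succ_lt (helt n)).le hδΛ) p
      (hcC (Order.succ (eseq n)) (hΛlim.succ_lt (heΛ n))) h1
    rw [hkey n] at h2
    exact hXnf (eseq n) (hΛlim.succ_lt (heΛ n)) h2
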